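/- Consider the system of equations in real variables r > 0, s ≥ 0: 5r⁴ − 4r²s² − 16r² − 3s⁴ + 3 = 0 and rs(r(√3 r − 9) + √3(s² − 8)) = 0 and rs(r(√3 r + 9) + √3(s² − 8)) = 0 (these are μ₁ = μ₂ = μ₃ = 0 for the K₃-action, after clearing the positive factors |Z|⁻⁴ and trig factors, on the slice Z₀=1, Z₂ = r, Z₃ = 0, |Z₁| = s). Extending to r ≥ 0, the complete solution set is {(r,s)} = {(0,1), (√3, 0), (1/√5, 0)}. -/

import Mathlib

/-!
The last two equations differ by `18 r² s`, so every solution has `r = 0` or `s = 0`, and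
conversely on these two axes both of them hold trivially. What remains is the first equation
restricted to an axis: `3 - 3 s⁴ = 0` for `r = 0`, and the biquadratic
`5 r⁴ - 16 r² + 3 = (r² - 3) (5 r² - 1) = 0` for `s = 0`.
-/

open Real

lemma moment_system_iff_axis_and_first (r s : ℝ) :
    (5 * r ^ 4 - 4 * r ^ 2 * s ^ 2 - 16 * r ^ 2 - 3 * s ^ 4 + 3 = 0 ∧
      r * s * (r * (√3 * r - 9) + √3 * (s ^ 2 - 8)) = 0 ∧
      r * s * (r * (√3 * r + 9) + √3 * (s ^ 2 - 8)) = 0) ↔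
    (r = 0 ∨ s = 0) ∧ 5 * r ^ 4 - 4 * r ^ 2 * s ^ 2 - 16 * r ^ 2 - 3 * s ^ 4 + 3 = 0 := by
  constructor
  · rintro ⟨h₁, h₂, h₃⟩
    have hrrs : r * r * s = 0 := by linear_combination (h₃ - h₂) / 18
    simpa [or_self_left] using And.intro hrrs h₁
  · rintro ⟨haxis, h₁⟩
    have hrs : r * s = 0 := mul_eq_zero.mpr haxis
    simp [h₁, hrs]

lemma biquadratic_eq_zero_iff {r : ℝ} (hr : 0 ≤ r) :
    5 * r ^ 4 - 16 * r ^ 2 + 3 = 0 ↔ r = √3 ∨ r = 1 / √5 := by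
  have hfactor : 5 * r ^ 4 - 16 * r ^ 2 + 3 = (r ^ 2 - 3) * (5 * (r ^ 2 - 1 / 5)) := by ring
  rw [one_div, ← sqrt_inv, eq_comm (a := r), eq_comm (a := r),
    sqrt_eq_iff_eq_sq (by norm_num) hr, sqrt_eq_iff_eq_sq (by norm_num) hr, hfactor]
  simp only [mul_eq_zero, sub_eq_zero, OfNat.ofNat_ne_zero, false_or, one_div]
  exact or_congr eq_comm eq_comm

theorem stmt_17 (r s : ℝ) (hr : 0 ≤ r) (hs : 0 ≤ s) :
    (5 * r ^ 4 - 4 * r ^ 2 * s ^ 2 - 16 * r ^ 2 - 3 * s ^ 4 + 3 = 0 ∧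
      r * s * (r * (Real.sqrt 3 * r - 9) + Real.sqrt 3 * (s ^ 2 - 8)) = 0 ∧
      r * s * (r * (Real.sqrt 3 * r + 9) + Real.sqrt 3 * (s ^ 2 - 8)) = 0) ↔
    ((r = 0 ∧ s = 1) ∨ (r = Real.sqrt 3 ∧ s = 0) ∨ (r = 1 / Real.sqrt 5 ∧ s = 0)) := by
  rw [moment_system_iff_axis_and_first]
  constructor
  · rintro ⟨rfl | rfl, h⟩
    · have hs₄ : s ^ 4 = 1 := by linarith
      exact Or.inl ⟨rfl, (pow_eq_one_iff_of_nonneg hs four_ne_zero).mp hs₄⟩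
    · have hr' := (biquadratic_eq_zero_iff hr).mp (by linarith)
      tauto
  · rintro (⟨rfl, rfl⟩ | ⟨rfl, rfl⟩ | ⟨rfl, rfl⟩)
    · norm_num
    · have h := (biquadratic_eq_zero_iff hr).mpr (Or.inl rfl)
      exact ⟨Or.inr rfl, by linarith⟩
    · have h := (biquadratic_eq_zero_iff hr).mpr (Or.inr rfl)
      exact ⟨Or.inr rfl, by linarith⟩
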